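/- arXiv:0901.4745 — 4 statements merged into one kernel-verified Lean document; each statement's English description precedes it below -/
import Mathlib

section
/- For any 2N-periodic sequence v with zero mean over one period, the discrete Poincaré inequality holds: the l^2 norm of v is bounded by h/(2 sin(πh/2)) times the l^2 norm of its backward difference quotient Dv, where h = 1/N. -/
/-!
Descend the `2N`-periodic sequence to `ZMod (2N)`; the window `-N+1, …, N` is one full period.
There the discrete Fourier transform diagonalises the backward difference: it multiplies the
`k`-th coefficient by `1 - e^{-2πik/2N}`, of modulus `2 sin(πk/2N) ≥ 2 sin(π/2N)` for `k ≠ 0`,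
while the zero mean kills the coefficient `k = 0`. Parseval then gives
`4 sin²(π/2N) ‖v‖² ≤ ‖v - v(· - 1)‖²`, which is the claim after rescaling by `h = 1/N`.
-/

open Finset ZMod Real ComplexConjugate

lemma Real.sin_le_sin_of_mem_Icc {a x : ℝ} (ha : 0 ≤ a) (hx : x ∈ Set.Icc a (π - a)) :
    sin a ≤ sin x := by
  have hapi : a ≤ π := by linarith [hx.1, hx.2]
  have := strictConcaveOn_sin_Icc.concaveOn.min_le_of_mem_Icc ⟨ha, hapi⟩
    ⟨by linarith, by linarith⟩ hx
  rwa [sin_pi_sub, min_self] at this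

namespace ZMod

variable {n : ℕ} [NeZero n]

lemma two_mul_sin_pi_div_le_norm_one_sub_stdAddChar {k : ZMod n} (hk : k ≠ 0) :
    2 * sin (π / n) ≤ ‖1 - stdAddChar k‖ := by
  have hn : (0 : ℝ) < n := by exact_mod_cast (NeZero.pos n)
  have hval : stdAddChar k = Complex.exp (Complex.I * ↑(2 * π * k.val / n)) := by
    rw [stdAddChar_apply, toCircle_apply]; push_cast; ring_nf
  have hk1 : (1 : ℝ) ≤ k.val := by exact_mod_cast (val_pos.2 hk)
  have hkn : (k.val : ℝ) + 1 ≤ n := by exact_mod_cast k.val_lt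
  have hmem : π * k.val / n ∈ Set.Icc (π / n) (π - π / n) := by
    constructor
    · gcongr; exact le_mul_of_one_le_right pi_pos.le hk1
    · rw [le_sub_iff_add_le, ← add_div, div_le_iff₀ hn]; nlinarith [pi_pos]
  rw [norm_sub_rev, hval, Complex.norm_exp_I_mul_ofReal_sub_one, Real.norm_eq_abs]
  calc 2 * sin (π / n) ≤ 2 * sin (π * k.val / n) := by
        gcongr; exact sin_le_sin_of_mem_Icc (by positivity) hmem
    _ ≤ |2 * sin (2 * π * k.val / n / 2)| := by
        rw [show 2 * π * k.val / n / 2 = π * k.val / n by ring]; exact le_abs_self _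

lemma dft_comp_sub {E : Type*} [AddCommGroup E] [Module ℂ E] (Φ : ZMod n → E) (a k : ZMod n) :
    𝓕 (fun j ↦ Φ (j - a)) k = stdAddChar (-(a * k)) • 𝓕 Φ k := by
  simp only [dft_apply, Finset.smul_sum, smul_smul, ← AddChar.map_add_eq_mul]
  exact Fintype.sum_equiv (Equiv.subRight a) _ _ fun j ↦ by simp; ring_nf

lemma sum_conj_mul_dft (Φ Ψ : ZMod n → ℂ) :
    ∑ k, conj (Ψ k) * 𝓕 Φ k = ∑ j, conj (𝓕 Ψ (-j)) * Φ j := by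
  simp only [dft_apply, smul_eq_mul, mul_sum, sum_mul, map_sum, map_mul,
    ← AddChar.map_neg_eq_conj]
  rw [sum_comm]
  refine sum_congr rfl fun j _ ↦ sum_congr rfl fun k _ ↦ ?_
  ring_nf

lemma sum_sq_norm_dft (Φ : ZMod n → ℂ) : ∑ k, ‖𝓕 Φ k‖ ^ 2 = n * ∑ j, ‖Φ j‖ ^ 2 := by
  have key := sum_conj_mul_dft Φ (𝓕 Φ)
  simp only [dft_dft, neg_neg, smul_eq_mul, map_mul, Complex.conj_natCast, mul_assoc,
    ← mul_sum, Complex.conj_mul'] at key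
  exact_mod_cast key

lemma dft_sub_comp_sub_one (Φ : ZMod n → ℂ) (k : ZMod n) :
    𝓕 (fun j ↦ Φ j - Φ (j - 1)) k = (1 - stdAddChar (-k)) * 𝓕 Φ k := by
  rw [show (fun j ↦ Φ j - Φ (j - 1)) = Φ - fun j ↦ Φ (j - 1) from rfl, map_sub, Pi.sub_apply,
    dft_comp_sub, one_mul, smul_eq_mul, sub_mul, one_mul]

theorem four_mul_sin_sq_mul_sum_sq_norm_le {Φ : ZMod n → ℂ} (hΦ : ∑ j, Φ j = 0) :
    4 * sin (π / n) ^ 2 * ∑ j, ‖Φ j‖ ^ 2 ≤ ∑ j, ‖Φ j - Φ (j - 1)‖ ^ 2 := by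
  have hn : (1 : ℝ) ≤ n := by exact_mod_cast NeZero.one_le
  have hsin : 0 ≤ sin (π / n) :=
    sin_nonneg_of_nonneg_of_le_pi (by positivity) (div_le_self pi_pos.le hn)
  have hmode (k : ZMod n) :
      4 * sin (π / n) ^ 2 * ‖𝓕 Φ k‖ ^ 2 ≤ ‖𝓕 (fun j ↦ Φ j - Φ (j - 1)) k‖ ^ 2 := by
    rcases eq_or_ne k 0 with rfl | hk
    · simp [dft_apply_zero, hΦ]
    · rw [dft_sub_comp_sub_one, norm_mul, mul_pow, show (4 : ℝ) = 2 ^ 2 by norm_num, ← mul_pow]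
      gcongr
      exact two_mul_sin_pi_div_le_norm_one_sub_stdAddChar (neg_ne_zero.2 hk)
  refine le_of_mul_le_mul_left ?_ (by linarith : (0 : ℝ) < n)
  calc n * (4 * sin (π / n) ^ 2 * ∑ j, ‖Φ j‖ ^ 2) = 4 * sin (π / n) ^ 2 * ∑ k, ‖𝓕 Φ k‖ ^ 2 := by
        rw [sum_sq_norm_dft]; ring
    _ ≤ ∑ k, ‖𝓕 (fun j ↦ Φ j - Φ (j - 1)) k‖ ^ 2 := by
        rw [mul_sum]; exact sum_le_sum fun k _ ↦ hmode k
    _ = n * ∑ j, ‖Φ j - Φ (j - 1)‖ ^ 2 := sum_sq_norm_dft _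

theorem four_mul_sin_sq_mul_sum_sq_le {u : ZMod n → ℝ} (hu : ∑ j, u j = 0) :
    4 * sin (π / n) ^ 2 * ∑ j, u j ^ 2 ≤ ∑ j, (u j - u (j - 1)) ^ 2 := by
  simpa [← Complex.ofReal_sub, sq_abs] using
    four_mul_sin_sq_mul_sum_sq_norm_le (Φ := fun j ↦ (u j : ℂ)) (by exact_mod_cast hu)

lemma sum_Ico_intCast {M : Type*} [AddCommMonoid M] (F : ZMod n → M) (a : ℤ) :
    ∑ j ∈ Ico a (a + n), F j = ∑ x, F x := by
  refine sum_nbij' (fun j ↦ (j : ZMod n)) (fun x ↦ a + (x - a : ZMod n).val)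
    (by simp) (fun x _ ↦ ?_) (fun j hj ↦ ?_) (fun x _ ↦ by simp) (fun _ _ ↦ rfl)
  · have := (x - a : ZMod n).val_lt
    rw [mem_Ico]
    omega
  · rw [mem_Ico] at hj
    rw [← Int.cast_sub, val_intCast, Int.emod_eq_of_lt (by omega) (by omega)]
    ring

end ZMod

lemma Function.Periodic.apply_val_intCast {α : Type*} {f : ℤ → α} {n : ℕ} [NeZero n]
    (hf : Function.Periodic f n) (j : ℤ) : f (j : ZMod n).val = f j := by
  have := hf.sub_int_mul_eq (x := j) (j / n)
  rwa [Int.cast_id, mul_comm, ← Int.emod_def, ← ZMod.val_intCast] at this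

lemma Real.sqrt_mul_le_div_mul_sqrt_mul_div_sq {h c A B : ℝ} (hh : 0 < h) (hc : 0 < c)
    (hAB : c ^ 2 * A ≤ B) : √(h * A) ≤ h / c * √(h * (B / h ^ 2)) := by
  rw [← sqrt_sq (by positivity : 0 ≤ h / c), ← sqrt_mul (sq_nonneg _)]
  refine sqrt_le_sqrt ?_
  calc h * A = h / c ^ 2 * (c ^ 2 * A) := by field_simp
    _ ≤ h / c ^ 2 * B := by gcongr
    _ = (h / c) ^ 2 * (h * (B / h ^ 2)) := by field_simp

/-- Discrete Poincaré inequality for mean-zero 2N-periodic sequences: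
`‖v‖_{l²} ≤ (h/(2 sin(πh/2))) ‖Dv‖_{l²}` with `h = 1/N`. -/
theorem discrete_poincare (N : ℤ) (hN : 1 ≤ N) (h : ℝ) (hh : h = 1 / (N : ℝ))
    (v : ℤ → ℝ) (hper : ∀ j : ℤ, v (j + 2 * N) = v j)
    (hmean : ∑ j ∈ Finset.Icc (-N + 1) N, v j = 0) :
    Real.sqrt (h * ∑ j ∈ Finset.Icc (-N + 1) N, (v j) ^ 2) ≤
      (h / (2 * Real.sin (Real.pi * h / 2))) *
        Real.sqrt (h * ∑ j ∈ Finset.Icc (-N + 1) N, ((v j - v (j - 1)) / h) ^ 2) := by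
  lift N to ℕ using (by omega)
  have : NeZero (2 * N) := ⟨by omega⟩
  set u : ZMod (2 * N) → ℝ := fun x ↦ v x.val
  have hvu (j : ℤ) : v j = u j :=
    ((Function.Periodic.apply_val_intCast (n := 2 * N) fun j ↦ by push_cast; exact hper j) j).symm
  have hwindow : Icc (-(N : ℤ) + 1) N = Ico (-(N : ℤ) + 1) (-(N : ℤ) + 1 + (2 * N : ℕ)) := by
    ext; simp; omega
  simp only [hvu, Int.cast_sub, Int.cast_one, hwindow] at hmean ⊢
  rw [ZMod.sum_Ico_intCast u] at hmean
  rw [ZMod.sum_Ico_intCast (fun x ↦ u x ^ 2),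
    ZMod.sum_Ico_intCast (fun x ↦ ((u x - u (x - 1)) / h) ^ 2)]
  push_cast at hh
  have hN' : (1 : ℝ) ≤ N := by exact_mod_cast hN
  have hh0 : 0 < h := by rw [hh]; positivity
  have hh1 : h ≤ 1 := by rw [hh]; exact div_le_one_of_le₀ hN' (by positivity)
  have hangle : π * h / 2 = π / (2 * N : ℕ) := by rw [hh]; push_cast; field_simp
  have hs : 0 < sin (π * h / 2) := by
    refine sin_pos_of_pos_of_lt_pi (by positivity) ?_
    nlinarith [pi_pos]
  have gap := ZMod.four_mul_sin_sq_mul_sum_sq_le hmean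
  rw [← hangle] at gap
  simp only [div_pow, ← sum_div]
  exact sqrt_mul_le_div_mul_sqrt_mul_div_sq hh0 (by positivity) (by linarith)
end

section
/- The characteristic polynomial of the linearized second-neighbor atomistic difference scheme, -φ''_{2F} Λ² - φ''_F Λ + 2(φ''_F + φ''_{2F}) - φ''_F Λ^{-1} - φ''_{2F} Λ^{-2} = 0, has roots 1 (with multiplicity two), λ, and 1/λ, where λ = [(φ''_F + 2φ''_{2F}) + √((φ''_F)² + 4 φ''_F φ''_{2F})] / (-2 φ''_{2F}); moreover if φ''_F > 0, φ''_{2F} < 0, and φ''_F + 4φ''_{2F} > 0, then λ > 1. -/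
/-!
The quartic is palindromic with a double root at `1`: it equals `(x - 1)²` times the
palindromic quadratic `-b x² - (a + 2b) x - b`, whose discriminant is `a² + 4ab` and whose
roots are therefore `λ` and `1 / λ`. Clearing the denominator `-2b > 0`, the bound `λ > 1`
becomes `a + 4b + √(a² + 4ab) > 0`.
-/

theorem quartic_eq_sub_one_sq_mul {R : Type*} [CommRing R] (a b x : R) :
    -b * x ^ 4 - a * x ^ 3 + 2 * (a + b) * x ^ 2 - a * x - b =
      (x - 1) ^ 2 * (-b * x ^ 2 - (a + 2 * b) * x - b) := by
  ring

theorem palindromic_quadratic_eq_mul {K : Type*} [Field K] {b c r : K} (hr : r ≠ 0)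
    (hroot : b * r ^ 2 + c * r + b = 0) (x : K) :
    b * x ^ 2 + c * x + b = b * (x - r) * (x - 1 / r) := by
  have hc : c = -b * (r + 1 / r) := by
    field_simp
    linear_combination hroot
  rw [hc]
  field_simp
  ring

theorem discrim_palindromic {R : Type*} [CommRing R] (a b : R) :
    discrim b (a + 2 * b) b = a ^ 2 + 4 * a * b := by
  unfold discrim
  ring

/-- The characteristic polynomial `-bΛ⁴ - aΛ³ + 2(a+b)Λ² - aΛ - b` of the
linearized second-neighbor atomistic scheme (with `a = φ''_F`, `b = φ''_{2F}`)
factors with roots `1, 1, λ, 1/λ` where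
`λ = ((a+2b) + √(a²+4ab))/(-2b)`, and `λ > 1` under the stated assumptions. -/
theorem characteristic_roots (a b : ℝ) (ha : 0 < a) (hb : b < 0) (hab : 0 < a + 4 * b)
    (lam : ℝ) (hlam : lam = ((a + 2 * b) + Real.sqrt (a ^ 2 + 4 * a * b)) / (-2 * b)) :
    0 < a ^ 2 + 4 * a * b ∧ 1 < lam ∧
      ∀ x : ℝ, -b * x ^ 4 - a * x ^ 3 + 2 * (a + b) * x ^ 2 - a * x - b =
        -b * (x - 1) ^ 2 * (x - lam) * (x - 1 / lam) := by
  set s := Real.sqrt (a ^ 2 + 4 * a * b)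
  have hdisc_pos : 0 < a ^ 2 + 4 * a * b := by linear_combination mul_pos ha hab
  have hlam_gt : 1 < lam := by
    rw [hlam, one_lt_div (by linarith)]
    linarith [Real.sqrt_nonneg (a ^ 2 + 4 * a * b)]
  have hroot : b * lam ^ 2 + (a + 2 * b) * lam + b = 0 := by
    have hs : discrim b (a + 2 * b) b = s * s := by
      rw [discrim_palindromic, Real.mul_self_sqrt hdisc_pos.le]
    have hquad := (quadratic_eq_zero_iff hb.ne hs lam).2 (Or.inr (hlam.trans (by ring)))
    linear_combination hquad
  refine ⟨hdisc_pos, hlam_gt, fun x => ?_⟩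
  rw [quartic_eq_sub_one_sq_mul]
  have hfactor := palindromic_quadratic_eq_mul (zero_lt_one.trans hlam_gt).ne' hroot x
  linear_combination (-(x - 1) ^ 2) * hfactor
end

section
/- The QCE operator is coercive: if ν := φ''_F - 5|φ''_{2F}| > 0, then for every 2N-periodic sequence v, h v · L^{qce,h} v ≥ ν ||Dv||_{l^2}², where L^{qce,h} is the energy-based quasicontinuum operator with atomistic region {-K,...,K}. -/
/-- Backward difference quotient. -/
noncomputable def Dq (h : ℝ) (v : ℤ → ℝ) (j : ℤ) : ℝ := (v j - v (j - 1)) / h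

/-- Quadratic continuum strain energy density `Ŵ(ε) = (1/2)(a+4b)ε²`. -/
noncomputable def What (a b ε : ℝ) : ℝ := (1 / 2) * (a + 4 * b) * ε ^ 2

/-- Quadratic per-atom atomistic energy `Ê_j(v)`. -/
noncomputable def Ehat (a b h : ℝ) (v : ℤ → ℝ) (j : ℤ) : ℝ :=
  (h / 2) * ((1 / 2) * a * ((v (j + 1) - v j) / h) ^ 2
    + (1 / 2) * b * ((v (j + 2) - v j) / h) ^ 2)
  + (h / 2) * ((1 / 2) * a * ((v j - v (j - 1)) / h) ^ 2
    + (1 / 2) * b * ((v j - v (j - 2)) / h) ^ 2)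

/-- The quadratic QCE energy with atomistic region `{-K,…,K}`. -/
noncomputable def qceEnergy (a b h : ℝ) (N K : ℤ) (v : ℤ → ℝ) : ℝ :=
  (∑ l ∈ Finset.Icc (-N + 1) (-K - 1), h * What a b (Dq h v l))
    + (1 / 2) * h * What a b (Dq h v (-K))
    + (∑ j ∈ Finset.Icc (-K) K, Ehat a b h v j)
    + (1 / 2) * h * What a b (Dq h v (K + 1))
    + ∑ l ∈ Finset.Icc (K + 2) N, h * What a b (Dq h v l)

/-- The QCE operator `L^{qce,h}` for indices `0 ≤ j ≤ N` (`a = φ''_F`, `b = φ''_{2F}`). -/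
noncomputable def LqceP (a b h : ℝ) (K : ℤ) (u : ℤ → ℝ) (j : ℤ) : ℝ :=
  a * (-u (j + 1) + 2 * u j - u (j - 1)) / h ^ 2 +
  (if j ≤ K - 2 then
      4 * b * (-u (j + 2) + 2 * u j - u (j - 2)) / (4 * h ^ 2)
    else if j = K - 1 then
      4 * b * (-u (j + 2) + 2 * u j - u (j - 2)) / (4 * h ^ 2)
        + (b / h) * ((u (j + 2) - u j) / (2 * h))
    else if j = K then
      4 * b * (-u (j + 2) + 2 * u j - u (j - 2)) / (4 * h ^ 2)
        - (2 * b / h) * ((u (j + 1) - u j) / h)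
        + (b / h) * ((u (j + 2) - u j) / (2 * h))
    else if j = K + 1 then
      4 * b * (-u (j + 1) + 2 * u j - u (j - 1)) / h ^ 2
        - (2 * b / h) * ((u j - u (j - 1)) / h)
        + (b / h) * ((u j - u (j - 2)) / (2 * h))
    else if j = K + 2 then
      4 * b * (-u (j + 1) + 2 * u j - u (j - 1)) / h ^ 2
        + (b / h) * ((u j - u (j - 2)) / (2 * h))
    else
      4 * b * (-u (j + 1) + 2 * u j - u (j - 1)) / h ^ 2)

/-- The QCE operator extended to all indices by the symmetry `S L S = L`,
where `(Su)_j = -u_{-j}`. -/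
noncomputable def Lqce (a b h : ℝ) (K : ℤ) (u : ℤ → ℝ) (j : ℤ) : ℝ :=
  if 0 ≤ j then LqceP a b h K u j
  else -LqceP a b h K (fun i => -u (-i)) (-j)

/-! ### Auxiliary machinery for the coercivity proof -/

/-- Square of the backward difference quotient. -/
noncomputable def Sq (h : ℝ) (v : ℤ → ℝ) (j : ℤ) : ℝ := ((v j - v (j - 1)) / h) ^ 2

lemma sum_shift (f : ℤ → ℝ) (α β c : ℤ) :
    (∑ j ∈ Finset.Icc α β, f (j + c)) = ∑ j ∈ Finset.Icc (α + c) (β + c), f j := by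
  rw [← Finset.map_add_right_Icc, Finset.sum_map]
  rfl

/-- Lower-bound integrand: the pointwise pieces collected over the master range. -/
noncomputable def coefF (a b h : ℝ) (N K : ℤ) (v : ℤ → ℝ) (j : ℤ) : ℝ :=
  (if j ∈ Finset.Icc (-N+1) (-K-1) then ((a+4*b)*h) * Sq h v j else 0)
  + (if j = -K then ((a+4*b)*h/2) * Sq h v j else 0)
  + (if j ∈ Finset.Icc (-K+1) (K+1) then (a*h/2) * Sq h v j else 0)
  + (if j ∈ Finset.Icc (-K) K then (a*h/2) * Sq h v j else 0)
  + (if j ∈ Finset.Icc (-K+2) (K+2) then (b*h) * Sq h v j else 0)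
  + (if j ∈ Finset.Icc (-K+1) (K+1) then (b*h) * Sq h v j else 0)
  + (if j ∈ Finset.Icc (-K) K then (b*h) * Sq h v j else 0)
  + (if j ∈ Finset.Icc (-K-1) (K-1) then (b*h) * Sq h v j else 0)
  + (if j = K+1 then ((a+4*b)*h/2) * Sq h v j else 0)
  + (if j ∈ Finset.Icc (K+2) N then ((a+4*b)*h) * Sq h v j else 0)

lemma coefF_pointwise (N K : ℤ) (hK : 2 ≤ K) (hKN : K ≤ N - 2)
    (a b h ν : ℝ) (hb : b < 0) (hh0 : 0 < h) (hb5 : ν = a + 5 * b)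
    (v : ℤ → ℝ) (j : ℤ) (hj : j ∈ Finset.Icc (-N+1) N) :
    ν * h * Sq h v j ≤ coefF a b h N K v j := by
  rw [Finset.mem_Icc] at hj
  have hSq : 0 ≤ Sq h v j := by simp only [Sq]; positivity
  have hkey : 0 ≤ (-b) * h * Sq h v j :=
    mul_nonneg (mul_nonneg (by linarith) hh0.le) hSq
  subst hb5
  unfold coefF
  simp only [Finset.mem_Icc]
  split_ifs <;> first | (exfalso; omega) | linarith [hkey]

lemma sum_coefF (a b h : ℝ) (N K : ℤ) (hK : 2 ≤ K) (hKN : K ≤ N - 2) (v : ℤ → ℝ) :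
    (∑ j ∈ Finset.Icc (-N+1) N, coefF a b h N K v j)
      = (∑ j ∈ Finset.Icc (-N+1) (-K-1), ((a+4*b)*h) * Sq h v j)
        + ((a+4*b)*h/2) * Sq h v (-K)
        + (∑ j ∈ Finset.Icc (-K+1) (K+1), (a*h/2) * Sq h v j)
        + (∑ j ∈ Finset.Icc (-K) K, (a*h/2) * Sq h v j)
        + (∑ j ∈ Finset.Icc (-K+2) (K+2), (b*h) * Sq h v j)
        + (∑ j ∈ Finset.Icc (-K+1) (K+1), (b*h) * Sq h v j)
        + (∑ j ∈ Finset.Icc (-K) K, (b*h) * Sq h v j)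
        + (∑ j ∈ Finset.Icc (-K-1) (K-1), (b*h) * Sq h v j)
        + ((a+4*b)*h/2) * Sq h v (K+1)
        + (∑ j ∈ Finset.Icc (K+2) N, ((a+4*b)*h) * Sq h v j) := by
  have conv : ∀ (l r : ℤ), -N+1 ≤ l → r ≤ N → ∀ (c : ℝ),
      (∑ j ∈ Finset.Icc (-N+1) N, if j ∈ Finset.Icc l r then c * Sq h v j else 0)
        = ∑ j ∈ Finset.Icc l r, c * Sq h v j := by
    intro l r hl hr c
    rw [Finset.sum_ite_mem, Finset.inter_eq_right.mpr (Finset.Icc_subset_Icc hl hr)]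
  have conv1 : ∀ (i : ℤ), -N+1 ≤ i → i ≤ N → ∀ (c : ℝ),
      (∑ j ∈ Finset.Icc (-N+1) N, if j = i then c * Sq h v j else 0) = c * Sq h v i := by
    intro i hl hr c
    rw [Finset.sum_ite_eq' (Finset.Icc (-N+1) N) i (fun j => c * Sq h v j),
      if_pos (Finset.mem_Icc.mpr ⟨hl, hr⟩)]
  unfold coefF
  simp only [Finset.sum_add_distrib]
  rw [conv (-N+1) (-K-1) (by omega) (by omega) ((a+4*b)*h),
    conv1 (-K) (by omega) (by omega) ((a+4*b)*h/2),
    conv (-K+1) (K+1) (by omega) (by omega) (a*h/2),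
    conv (-K) K (by omega) (by omega) (a*h/2),
    conv (-K+2) (K+2) (by omega) (by omega) (b*h),
    conv (-K+1) (K+1) (by omega) (by omega) (b*h),
    conv (-K) K (by omega) (by omega) (b*h),
    conv (-K-1) (K-1) (by omega) (by omega) (b*h),
    conv1 (K+1) (by omega) (by omega) ((a+4*b)*h/2),
    conv (K+2) N (by omega) (by omega) ((a+4*b)*h)]

lemma atom_bound (a b h : ℝ) (hb : b < 0) (hh0 : 0 < h) (v : ℤ → ℝ) (j : ℤ) :
    (a*h/2) * Sq h v (j+1) + (a*h/2) * Sq h v j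
      + (b*h) * Sq h v (j+2) + (b*h) * Sq h v (j+1)
      + (b*h) * Sq h v j + (b*h) * Sq h v (j-1)
      ≤ 2 * Ehat a b h v j := by
  simp only [Ehat, Sq, show j+1-1 = j from by ring, show j+2-1 = j+1 from by ring,
    show j-1-1 = j-2 from by ring]
  have t1 : 0 ≤ h * (-b) * ((v (j+2) - v (j+1))/h - (v (j+1) - v j)/h) ^ 2 :=
    mul_nonneg (mul_nonneg hh0.le (neg_nonneg.mpr hb.le)) (sq_nonneg _)
  have t2 : 0 ≤ h * (-b) * ((v j - v (j-1))/h - (v (j-1) - v (j-2))/h) ^ 2 :=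
    mul_nonneg (mul_nonneg hh0.le (neg_nonneg.mpr hb.le)) (sq_nonneg _)
  have e1 : (v (j+2) - v j) / h = (v (j+2) - v (j+1))/h + (v (j+1) - v j)/h := by ring
  have e2 : (v j - v (j-2)) / h = (v j - v (j-1))/h + (v (j-1) - v (j-2))/h := by ring
  rw [e1, e2]
  ring_nf
  ring_nf at t1 t2
  nlinarith [t1, t2]

lemma energy_ge (a b h : ℝ) (N K : ℤ) (hb : b < 0) (hh0 : 0 < h) (v : ℤ → ℝ) :
    (∑ j ∈ Finset.Icc (-N+1) (-K-1), ((a+4*b)*h) * Sq h v j)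
      + ((a+4*b)*h/2) * Sq h v (-K)
      + (∑ j ∈ Finset.Icc (-K+1) (K+1), (a*h/2) * Sq h v j)
      + (∑ j ∈ Finset.Icc (-K) K, (a*h/2) * Sq h v j)
      + (∑ j ∈ Finset.Icc (-K+2) (K+2), (b*h) * Sq h v j)
      + (∑ j ∈ Finset.Icc (-K+1) (K+1), (b*h) * Sq h v j)
      + (∑ j ∈ Finset.Icc (-K) K, (b*h) * Sq h v j)
      + (∑ j ∈ Finset.Icc (-K-1) (K-1), (b*h) * Sq h v j)
      + ((a+4*b)*h/2) * Sq h v (K+1)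
      + (∑ j ∈ Finset.Icc (K+2) N, ((a+4*b)*h) * Sq h v j)
      ≤ 2 * qceEnergy a b h N K v := by
  have c1 : (∑ l ∈ Finset.Icc (-N+1) (-K-1), ((a+4*b)*h) * Sq h v l)
      = 2 * ∑ l ∈ Finset.Icc (-N+1) (-K-1), h * What a b (Dq h v l) := by
    rw [Finset.mul_sum]
    exact Finset.sum_congr rfl fun l _ => by simp only [Sq, What, Dq]; ring
  have c5 : (∑ l ∈ Finset.Icc (K+2) N, ((a+4*b)*h) * Sq h v l)
      = 2 * ∑ l ∈ Finset.Icc (K+2) N, h * What a b (Dq h v l) := by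
    rw [Finset.mul_sum]
    exact Finset.sum_congr rfl fun l _ => by simp only [Sq, What, Dq]; ring
  have c2 : ((a+4*b)*h/2) * Sq h v (-K)
      = 2 * ((1/2) * h * What a b (Dq h v (-K))) := by
    simp only [Sq, What, Dq]; ring
  have c4 : ((a+4*b)*h/2) * Sq h v (K+1)
      = 2 * ((1/2) * h * What a b (Dq h v (K+1))) := by
    simp only [Sq, What, Dq]; ring
  have r1 : (∑ j ∈ Finset.Icc (-K) K, (a*h/2) * Sq h v (j+1))
      = ∑ j ∈ Finset.Icc (-K+1) (K+1), (a*h/2) * Sq h v j := by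
    simpa using sum_shift (fun i => (a*h/2) * Sq h v i) (-K) K 1
  have r2 : (∑ j ∈ Finset.Icc (-K) K, (b*h) * Sq h v (j+2))
      = ∑ j ∈ Finset.Icc (-K+2) (K+2), (b*h) * Sq h v j := by
    simpa using sum_shift (fun i => (b*h) * Sq h v i) (-K) K 2
  have r3 : (∑ j ∈ Finset.Icc (-K) K, (b*h) * Sq h v (j+1))
      = ∑ j ∈ Finset.Icc (-K+1) (K+1), (b*h) * Sq h v j := by
    simpa using sum_shift (fun i => (b*h) * Sq h v i) (-K) K 1
  have r4 : (∑ j ∈ Finset.Icc (-K) K, (b*h) * Sq h v (j-1))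
      = ∑ j ∈ Finset.Icc (-K-1) (K-1), (b*h) * Sq h v j := by
    simpa [sub_eq_add_neg] using sum_shift (fun i => (b*h) * Sq h v i) (-K) K (-1)
  have c3 : (∑ j ∈ Finset.Icc (-K+1) (K+1), (a*h/2) * Sq h v j)
      + (∑ j ∈ Finset.Icc (-K) K, (a*h/2) * Sq h v j)
      + (∑ j ∈ Finset.Icc (-K+2) (K+2), (b*h) * Sq h v j)
      + (∑ j ∈ Finset.Icc (-K+1) (K+1), (b*h) * Sq h v j)
      + (∑ j ∈ Finset.Icc (-K) K, (b*h) * Sq h v j)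
      + (∑ j ∈ Finset.Icc (-K-1) (K-1), (b*h) * Sq h v j)
      ≤ 2 * ∑ j ∈ Finset.Icc (-K) K, Ehat a b h v j := by
    rw [← r1, ← r2, ← r3, ← r4, ← Finset.sum_add_distrib, ← Finset.sum_add_distrib,
      ← Finset.sum_add_distrib, ← Finset.sum_add_distrib, ← Finset.sum_add_distrib,
      Finset.mul_sum]
    exact Finset.sum_le_sum fun j _ => atom_bound a b h hb hh0 v j
  unfold qceEnergy
  linarith [c1, c2, c3, c4, c5]

/-- Coercivity of the QCE operator: if `ν = φ''_F - 5|φ''_{2F}| > 0` then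
`h v·L^{qce,h}v = 2 E^{qce}(v) ≥ ν ‖Dv‖²_{l²}` for all 2N-periodic `v`. -/
theorem qce_coercivity (N K : ℤ) (hN : 1 ≤ N) (hK : 2 ≤ K) (hKN : K ≤ N - 2)
    (a b h : ℝ) (ha : 0 < a) (hb : b < 0) (hh : h = 1 / (N : ℝ))
    (ν : ℝ) (hν : ν = a - 5 * |b|) (hν0 : 0 < ν)
    (v : ℤ → ℝ) (hper : ∀ j : ℤ, v (j + 2 * N) = v j) :
    2 * qceEnergy a b h N K v ≥
      ν * (h * ∑ j ∈ Finset.Icc (-N + 1) N, ((v j - v (j - 1)) / h) ^ 2) := by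
  have hN0 : (0:ℝ) < (N : ℝ) := by exact_mod_cast (show (0:ℤ) < N by omega)
  have hh0 : 0 < h := by rw [hh]; positivity
  have hb5 : ν = a + 5 * b := by rw [hν, abs_of_neg hb]; ring
  calc ν * (h * ∑ j ∈ Finset.Icc (-N + 1) N, ((v j - v (j - 1)) / h) ^ 2)
      = ∑ j ∈ Finset.Icc (-N+1) N, ν * h * Sq h v j := by
        rw [Finset.mul_sum, Finset.mul_sum]
        exact Finset.sum_congr rfl fun j _ => by simp only [Sq]; ring
    _ ≤ ∑ j ∈ Finset.Icc (-N+1) N, coefF a b h N K v j :=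
        Finset.sum_le_sum fun j hj =>
          coefF_pointwise N K hK hKN a b h ν hb hh0 hb5 v j hj
    _ = _ := sum_coefF a b h N K hK hKN v
    _ ≤ 2 * qceEnergy a b h N K v := energy_ge a b h N K hb hh0 v
end

section
/- Summing the QCE residual equations across the interface gives m₁ = m₂ + hΔρ/(φ''_F + 4φ''_{2F}): if e is a 2N-periodic sequence that equals m₁hj + β(λ^j - λ^{-j})/λ^K for 0 ≤ j ≤ K, equals m₂hj - m₂ for K+2 ≤ j ≤ N (with arbitrary value at j = K+1), and satisfies the homogeneous atomistic recurrence in the atomistic interior and continuum recurrence in the continuum interior, then Σ_{j=K-1}^{K+2}(L^{qce,h}e)_j = (φ''_F + 4φ''_{2F})(m₁ - m₂)/h. -/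
/-!
Summing `L^{qce,h}` over the four interface rows telescopes: `h²` times the sum is the
atomistic flux through the bond `(K-2, K-1)` minus the continuum flux `(a+4b)(e_{K+3}-e_{K+2})`,
and `e_{K+1}` cancels. Both fluxes of an affine profile with slope `m` equal `(a+4b)m`. The
atomistic flux of `λ^j` is `λ^j · fluxSymbol λ`, and `(1-λ⁻¹) · fluxSymbol λ` is minus the
characteristic polynomial, which is invariant under `λ ↦ λ⁻¹`; so the flux of `λ^j - λ^{-j}`
vanishes.
-/

/-- `h²` times the force transmitted across the cut between atoms `j` and `j+1`: the bond
`(j, j+1)` and the second-neighbour bonds `(j, j+2)`, `(j-1, j+1)`. -/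
def atomFlux (a b : ℝ) (u : ℤ → ℝ) (j : ℤ) : ℝ :=
  a * (u (j + 1) - u j) + b * (u (j + 2) - u j) + b * (u (j + 1) - u (j - 1))

noncomputable def fluxSymbol (a b lam : ℝ) : ℝ :=
  a * (lam - 1) + b * (lam ^ 2 - 1) + b * (lam - lam⁻¹)

lemma Set.EqOn.of_odd {β : Type*} [Neg β] {e f : ℤ → β} {K : ℤ}
    (he : ∀ j, e (-j) = -e j) (hf : ∀ j, f (-j) = -f j) (hef : Set.EqOn e f (Set.Icc 0 K)) :
    Set.EqOn e f (Set.Icc (-K) K) := by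
  rintro j ⟨hj₁, hj₂⟩
  rcases le_total 0 j with hj | hj
  · exact hef ⟨hj, hj₂⟩
  · rw [← neg_neg j, he, hf, hef ⟨by omega, by omega⟩]

section atomFlux

variable {a b : ℝ}

lemma sum_Lqce_interface (h : ℝ) {K : ℤ} (hK : 1 ≤ K) (u : ℤ → ℝ) :
    ∑ j ∈ Finset.Icc (K - 1) (K + 2), Lqce a b h K u j =
      (atomFlux a b u (K - 2) - (a + 4 * b) * (u (K + 3) - u (K + 2))) / h ^ 2 := by
  have hIcc : Finset.Icc (K - 1) (K + 2) = {K - 1, K, K + 1, K + 2} := by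
    ext j; simp only [Finset.mem_Icc, Finset.mem_insert, Finset.mem_singleton]; omega
  rw [hIcc, Finset.sum_insert (by simp; omega), Finset.sum_insert (by simp),
    Finset.sum_insert (by simp), Finset.sum_singleton]
  simp (disch := omega) only [Lqce, LqceP, atomFlux, if_pos, if_neg, if_true]
  ring_nf

lemma atomFlux_congr {u v : ℤ → ℝ} {j : ℤ} (huv : Set.EqOn u v (Set.Icc (j - 1) (j + 2))) :
    atomFlux a b u j = atomFlux a b v j := by
  have hu : ∀ i, j - 1 ≤ i → i ≤ j + 2 → u i = v i := fun i hi₁ hi₂ => huv ⟨hi₁, hi₂⟩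
  simp only [atomFlux, hu j (by omega) (by omega), hu (j + 1) (by omega) (by omega),
    hu (j + 2) (by omega) (by omega), hu (j - 1) (by omega) (by omega)]

lemma atomFlux_affine_add (m c : ℝ) (u : ℤ → ℝ) (j : ℤ) :
    atomFlux a b (fun i => m * i + c * u i) j = (a + 4 * b) * m + c * atomFlux a b u j := by
  simp only [atomFlux]; push_cast; ring

lemma atomFlux_sub (u v : ℤ → ℝ) (j : ℤ) :
    atomFlux a b (fun i => u i - v i) j = atomFlux a b u j - atomFlux a b v j := by
  simp only [atomFlux]; ring

lemma atomFlux_zpow {lam : ℝ} (hlam : lam ≠ 0) (j : ℤ) :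
    atomFlux a b (fun i => lam ^ i) j = lam ^ j * fluxSymbol a b lam := by
  simp only [atomFlux, fluxSymbol, zpow_add₀ hlam, zpow_sub₀ hlam, zpow_one, zpow_two]
  field_simp

lemma neg_mul_fluxSymbol {lam : ℝ} (hlam : lam ≠ 0) :
    -(1 - lam⁻¹) * fluxSymbol a b lam =
      -b * lam ^ 2 - a * lam + 2 * (a + b) - a / lam - b / lam ^ 2 := by
  simp only [fluxSymbol]
  field_simp
  ring

lemma fluxSymbol_eq_zero {lam : ℝ} (hlam0 : lam ≠ 0) (hlam1 : lam ≠ 1)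
    (hroot : -b * lam ^ 2 - a * lam + 2 * (a + b) - a / lam - b / lam ^ 2 = 0) :
    fluxSymbol a b lam = 0 := by
  rw [← neg_mul_fluxSymbol hlam0] at hroot
  have : 1 - lam⁻¹ ≠ 0 := sub_ne_zero.2 (by simpa [eq_comm] using hlam1)
  exact (mul_eq_zero.1 hroot).resolve_left (neg_ne_zero.2 this)

lemma atomFlux_odd_profile {lam : ℝ} (hlam0 : lam ≠ 0) (hlam1 : lam ≠ 1)
    (hroot : -b * lam ^ 2 - a * lam + 2 * (a + b) - a / lam - b / lam ^ 2 = 0)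
    (m c : ℝ) (j : ℤ) :
    atomFlux a b (fun i => m * i + c * (lam ^ i - lam ^ (-i))) j = (a + 4 * b) * m := by
  have hroot_inv :
      -b * lam⁻¹ ^ 2 - a * lam⁻¹ + 2 * (a + b) - a / lam⁻¹ - b / lam⁻¹ ^ 2 = 0 := by
    rw [← hroot]; simp only [div_eq_mul_inv, inv_pow, inv_inv]; ring
  simp only [atomFlux_affine_add, ← inv_zpow', atomFlux_sub, atomFlux_zpow hlam0,
    atomFlux_zpow (inv_ne_zero hlam0), fluxSymbol_eq_zero hlam0 hlam1 hroot,
    fluxSymbol_eq_zero (inv_ne_zero hlam0) (inv_ne_one.2 hlam1) hroot_inv]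
  ring

end atomFlux

theorem qce_interface_sum_general (N K : ℤ) (hK : 2 ≤ K) (hKN : K ≤ N - 3)
    (a b h lam m1 m2 β : ℝ) (hlam1 : 1 < lam)
    (hroot : -b * lam ^ 2 - a * lam + 2 * (a + b) - a / lam - b / lam ^ 2 = 0)
    (e : ℤ → ℝ)
    (he1 : ∀ j : ℤ, 0 ≤ j → j ≤ K →
      e j = m1 * h * (j : ℝ) + β * (lam ^ j - lam ^ (-j)) / lam ^ K)
    (he2 : ∀ j : ℤ, K + 2 ≤ j → j ≤ N → e j = m2 * h * (j : ℝ) - m2)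
    (hodd : ∀ j : ℤ, e (-j) = -e j) :
    ∑ j ∈ Finset.Icc (K - 1) (K + 2), Lqce a b h K e j =
      (a + 4 * b) * (m1 - m2) / h := by
  set p : ℤ → ℝ := fun i => m1 * h * i + β / lam ^ K * (lam ^ i - lam ^ (-i))
  have hep : Set.EqOn e p (Set.Icc (-K) K) :=
    Set.EqOn.of_odd hodd (fun i => by simp only [p, neg_neg, Int.cast_neg]; ring)
      fun i ⟨hi₀, hiK⟩ => by rw [he1 i hi₀ hiK]; ring
  have hatom : atomFlux a b e (K - 2) = (a + 4 * b) * (m1 * h) := by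
    rw [atomFlux_congr (hep.mono (Set.Icc_subset_Icc (by omega) (by omega)))]
    exact atomFlux_odd_profile (zero_lt_one.trans hlam1).ne' hlam1.ne' hroot _ _ _
  have hcont : e (K + 3) - e (K + 2) = m2 * h := by
    rw [he2 _ (by omega) (by omega), he2 _ (by omega) (by omega)]; push_cast; ring
  calc _ = (a + 4 * b) * (m1 - m2) * (h / (h * h)) := by
        rw [sum_Lqce_interface h (by omega), hatom, hcont]; ring
    _ = _ := by rw [div_self_mul_self', div_eq_mul_inv]

/-- Summing the QCE residual equations across the interface: if `e` equals the
atomistic profile `m₁ h j + β(λ^j - λ^{-j})/λ^K` for `0 ≤ j ≤ K`, the continuum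
profile `m₂ h j - m₂` for `K+2 ≤ j ≤ N` (with arbitrary value at `j = K+1`),
and is odd, then `Σ_{j=K-1}^{K+2} (L^{qce,h}e)_j = (φ''_F + 4φ''_{2F})(m₁-m₂)/h`. -/
theorem qce_interface_sum (N K : ℤ) (hN : 1 ≤ N) (hK : 2 ≤ K) (hKN : K ≤ N - 3)
    (a b h lam m1 m2 β : ℝ) (ha : 0 < a) (hb : b < 0) (hab : 0 < a + 4 * b)
    (hh : h = 1 / (N : ℝ)) (hlam1 : 1 < lam)
    (hroot : -b * lam ^ 2 - a * lam + 2 * (a + b) - a / lam - b / lam ^ 2 = 0)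
    (e : ℤ → ℝ)
    (he1 : ∀ j : ℤ, 0 ≤ j → j ≤ K →
      e j = m1 * h * (j : ℝ) + β * (lam ^ j - lam ^ (-j)) / lam ^ K)
    (he2 : ∀ j : ℤ, K + 2 ≤ j → j ≤ N → e j = m2 * h * (j : ℝ) - m2)
    (hodd : ∀ j : ℤ, e (-j) = -e j) :
    ∑ j ∈ Finset.Icc (K - 1) (K + 2), Lqce a b h K e j =
      (a + 4 * b) * (m1 - m2) / h :=
  qce_interface_sum_general N K hK hKN a b h lam m1 m2 β hlam1 hroot e he1 he2 hodd
end
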